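/- Let A ≥ 1 and let Ω_n ⊂ ℂ be A-uniform domains whose complements E_n = ℂ \ Ω_n converge in the Hausdorff sense to a compact set E ⊂ ℂ. Then Ω = ℂ \ E is an A-uniform domain (in particular it is connected). -/

import Mathlib

open Set Metric Filter Topology
open scoped ENNReal

noncomputable section

/-- `S` is a connected component of the complement of `Ω`. -/
def IsComplComponent (Ω S : Set ℂ) : Prop := ∃ z ∈ Ωᶜ, S = connectedComponentIn Ωᶜ z

/-- The inner length metric `λ_Ω`: infimum of lengths of curves in `Ω` joining the points. -/
def innerLen (Ω : Set ℂ) (a b : ℂ) : ℝ≥0∞ :=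
  ⨅ γ : {γ : ℝ → ℂ // ContinuousOn γ (Set.Icc 0 1) ∧ Set.MapsTo γ (Set.Icc 0 1) Ω ∧
      γ 0 = a ∧ γ 1 = b}, eVariationOn γ.1 (Set.Icc 0 1)

/-- The inner diameter metric `ρ_Ω`: infimum of diameters of curves in `Ω` joining the points. -/
def innerDiam (Ω : Set ℂ) (a b : ℂ) : ℝ≥0∞ :=
  ⨅ γ : {γ : ℝ → ℂ // ContinuousOn γ (Set.Icc 0 1) ∧ Set.MapsTo γ (Set.Icc 0 1) Ω ∧
      γ 0 = a ∧ γ 1 = b}, EMetric.diam (γ.1 '' Set.Icc 0 1)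

/-- An inner `A`-uniform curve (length version) in `Ω`. -/
def IsInnerUniformCurve (A : ℝ) (Ω : Set ℂ) (γ : ℝ → ℂ) : Prop :=
  ContinuousOn γ (Set.Icc 0 1) ∧ Set.MapsTo γ (Set.Icc 0 1) Ω ∧
  eVariationOn γ (Set.Icc 0 1) ≤ ENNReal.ofReal A * innerLen Ω (γ 0) (γ 1) ∧
  ∀ t ∈ Set.Icc (0:ℝ) 1,
    min (eVariationOn γ (Set.Icc 0 t)) (eVariationOn γ (Set.Icc t 1))
      ≤ ENNReal.ofReal (A * Metric.infDist (γ t) (frontier Ω))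

/-- An inner `A`-uniform domain in the plane. -/
def IsInnerUniformDomain (A : ℝ) (Ω : Set ℂ) : Prop :=
  IsOpen Ω ∧ IsConnected Ω ∧
  ∀ a ∈ Ω, ∀ b ∈ Ω, ∃ γ : ℝ → ℂ, IsInnerUniformCurve A Ω γ ∧ γ 0 = a ∧ γ 1 = b

/-- An `A`-uniform curve in `Ω`. -/
def IsUniformCurve (A : ℝ) (Ω : Set ℂ) (γ : ℝ → ℂ) : Prop :=
  ContinuousOn γ (Set.Icc 0 1) ∧ Set.MapsTo γ (Set.Icc 0 1) Ω ∧
  eVariationOn γ (Set.Icc 0 1) ≤ ENNReal.ofReal (A * dist (γ 0) (γ 1)) ∧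
  ∀ t ∈ Set.Icc (0:ℝ) 1,
    min (eVariationOn γ (Set.Icc 0 t)) (eVariationOn γ (Set.Icc t 1))
      ≤ ENNReal.ofReal (A * Metric.infDist (γ t) (frontier Ω))

/-- An `A`-uniform domain in the plane. -/
def IsUniformDomain (A : ℝ) (Ω : Set ℂ) : Prop :=
  IsOpen Ω ∧ IsConnected Ω ∧
  ∀ a ∈ Ω, ∀ b ∈ Ω, ∃ γ : ℝ → ℂ, IsUniformCurve A Ω γ ∧ γ 0 = a ∧ γ 1 = b

/-!
Join `a, b ∉ E` in `Ω_n` (for `n` large) by `A`-uniform curves and reparametrize them by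
arclength: their lengths are at most `A |a - b|`, so they are uniformly Lipschitz and
Arzelà–Ascoli gives a pointwise limit curve. The length of an arc is lower semicontinuous under
pointwise convergence, and `dist(z, ∂Ω_n) ≤ dist(z, E) + d_H(E_n, E)`, so both uniformity
inequalities pass to the limit with `dist(·, E)` on the right. At a point of `E` the cigar
inequality would force the point to coincide with `a` or `b`, so the limit curve avoids `E`;
since `∂(ℂ \ E) ⊆ E`, it is an `A`-uniform curve in `ℂ \ E`.
-/

open scoped NNReal

theorem LocallyBoundedVariationOn.continuousOn_variationOnFromTo {α E : Type*} [LinearOrder α]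
    [TopologicalSpace α] [OrderTopology α] [PseudoMetricSpace E] {f : α → E} {s : Set α}
    (hf : LocallyBoundedVariationOn f s) (hcont : ContinuousOn f s) {a : α} (ha : a ∈ s) :
    ContinuousOn (variationOnFromTo f s a) s := by
  intro x hx
  have hleft : ContinuousWithinAt (variationOnFromTo f s a) (s ∩ Iio x) x := by
    have := variationOnFromTo.tendsto_left ha hx hf ((hcont x hx).mono inter_subset_left)
    rwa [dist_self, sub_zero] at this
  have hright : ContinuousWithinAt (variationOnFromTo f s a) (s ∩ Ioi x) x := by
    have := variationOnFromTo.tendsto_right ha hx hf ((hcont x hx).mono inter_subset_left)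
    rwa [dist_self, add_zero] at this
  refine ((hleft.union hright).union continuousWithinAt_singleton).mono fun y hy => ?_
  rcases lt_trichotomy y x with h | rfl | h
  exacts [.inl (.inl ⟨hy, h⟩), .inr rfl, .inl (.inr ⟨hy, h⟩)]

theorem HasConstantSpeedOnWith.lipschitzOnWith {E : Type*} [PseudoEMetricSpace E] {f : ℝ → E}
    {s : Set ℝ} {l : ℝ≥0} (hf : HasConstantSpeedOnWith f s l) : LipschitzOnWith l f s := by
  suffices h : ∀ x ∈ s, ∀ y ∈ s, x ≤ y → edist (f x) (f y) ≤ l * edist x y by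
    intro x hx y hy
    rcases le_total x y with hxy | hyx
    · exact h x hx y hy hxy
    · rw [edist_comm, edist_comm x]; exact h y hy x hx hyx
  intro x hx y hy hxy
  calc edist (f x) (f y) ≤ eVariationOn f (s ∩ Icc x y) :=
        eVariationOn.edist_le f ⟨hx, le_rfl, hxy⟩ ⟨hy, hxy, le_rfl⟩
    _ = l * edist x y := by
        rw [hf hx hy, edist_dist, Real.dist_eq, abs_sub_comm, abs_of_nonneg (sub_nonneg.2 hxy),
          ENNReal.ofReal_mul l.coe_nonneg, ENNReal.ofReal_coe_nnreal]

theorem exists_monotoneOn_lipschitzOnWith_comp {E : Type*} [MetricSpace E] {γ : ℝ → E}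
    (hγ : ContinuousOn γ (Icc 0 1)) (hbv : BoundedVariationOn γ (Icc 0 1)) :
    ∃ φ : ℝ → ℝ, MonotoneOn φ (Icc 0 1) ∧ MapsTo φ (Icc 0 1) (Icc 0 1) ∧
      γ (φ 0) = γ 0 ∧ γ (φ 1) = γ 1 ∧
      LipschitzOnWith (eVariationOn γ (Icc 0 1)).toNNReal (γ ∘ φ) (Icc 0 1) := by
  have hlbv := hbv.locallyBoundedVariationOn
  have h0 : (0:ℝ) ∈ Icc (0:ℝ) 1 := left_mem_Icc.2 zero_le_one
  have h1 : (1:ℝ) ∈ Icc (0:ℝ) 1 := right_mem_Icc.2 zero_le_one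
  set v := variationOnFromTo γ (Icc 0 1) 0
  set L := (eVariationOn γ (Icc 0 1)).toNNReal
  have hv0 : v 0 = 0 := variationOnFromTo.self _ _ _
  have hv1 : v 1 = L := by
    simp only [v, variationOnFromTo.eq_of_le _ _ zero_le_one, inter_self]; rfl
  have hvmono : MonotoneOn v (Icc 0 1) := variationOnFromTo.monotoneOn hlbv h0
  have himage : v '' Icc 0 1 = Icc 0 (L : ℝ) := by
    have : v '' Icc 0 1 = Icc (v 0) (v 1) :=
      (hlbv.continuousOn_variationOnFromTo hγ h0).image_Icc_of_monotoneOn zero_le_one hvmono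
    rwa [hv0, hv1] at this
  set ψ := Function.invFunOn v (Icc 0 1)
  have hsurj : SurjOn v (Icc 0 1) (Icc 0 (L : ℝ)) := himage ▸ surjOn_image v _
  have hψmaps : MapsTo ψ (Icc 0 (L : ℝ)) (Icc 0 1) := hsurj.mapsTo_invFunOn
  have hscale : MapsTo (fun t : ℝ => (L : ℝ) * t) (Icc 0 1) (Icc 0 (L : ℝ)) := fun t ht =>
    ⟨mul_nonneg L.coe_nonneg ht.1, mul_le_of_le_one_right L.coe_nonneg ht.2⟩
  have hunit : LipschitzOnWith 1 (γ ∘ ψ) (Icc 0 (L : ℝ)) :=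
    himage ▸ (has_unit_speed_naturalParameterization γ hlbv h0).lipschitzOnWith
  have hψv : ∀ x ∈ Icc (0:ℝ) 1, γ (ψ (v x)) = γ x := fun x hx =>
    edist_eq_zero.1 (edist_naturalParameterization_eq_zero hlbv h0 hx)
  refine ⟨fun t => ψ (L * t), ?_, hψmaps.comp hscale, ?_, ?_, ?_⟩
  · exact (Function.monotoneOn_of_rightInvOn_of_mapsTo hvmono hsurj.rightInvOn_invFunOn
      hψmaps).comp (fun s _ t _ hst => mul_le_mul_of_nonneg_left hst L.coe_nonneg) hscale
  · simpa [hv0] using hψv 0 h0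
  · simpa [hv1] using hψv 1 h1
  · have := hunit.comp (lipschitzWith_smul (L : ℝ)).lipschitzOnWith hscale
    rwa [one_mul, NNReal.nnnorm_eq] at this

theorem IsUniformCurve.comp_monotoneOn {A : ℝ} {Ω : Set ℂ} {γ : ℝ → ℂ} {φ : ℝ → ℝ}
    (hγ : IsUniformCurve A Ω γ) (hφ : MonotoneOn φ (Icc 0 1))
    (hφmaps : MapsTo φ (Icc 0 1) (Icc 0 1)) (h0 : γ (φ 0) = γ 0) (h1 : γ (φ 1) = γ 1)
    (hcont : ContinuousOn (γ ∘ φ) (Icc 0 1)) : IsUniformCurve A Ω (γ ∘ φ) := by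
  obtain ⟨-, hmaps, hlength, hcigar⟩ := hγ
  refine ⟨hcont, hmaps.comp hφmaps, ?_, fun t ht => ?_⟩
  · calc eVariationOn (γ ∘ φ) (Icc 0 1) ≤ eVariationOn γ (Icc 0 1) :=
          eVariationOn.comp_le_of_monotoneOn γ φ hφ hφmaps
      _ ≤ ENNReal.ofReal (A * dist ((γ ∘ φ) 0) ((γ ∘ φ) 1)) := by
          rwa [Function.comp_apply, Function.comp_apply, h0, h1]
  · have hleft : eVariationOn (γ ∘ φ) (Icc 0 t) ≤ eVariationOn γ (Icc 0 (φ t)) :=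
      eVariationOn.comp_le_of_monotoneOn γ φ (hφ.mono (Icc_subset_Icc_right ht.2)) fun x hx =>
        ⟨(hφmaps ⟨hx.1, hx.2.trans ht.2⟩).1, hφ ⟨hx.1, hx.2.trans ht.2⟩ ht hx.2⟩
    have hright : eVariationOn (γ ∘ φ) (Icc t 1) ≤ eVariationOn γ (Icc (φ t) 1) :=
      eVariationOn.comp_le_of_monotoneOn γ φ (hφ.mono (Icc_subset_Icc_left ht.1)) fun x hx =>
        ⟨hφ ht ⟨ht.1.trans hx.1, hx.2⟩ hx.1, (hφmaps ⟨ht.1.trans hx.1, hx.2⟩).2⟩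
    exact (min_le_min hleft hright).trans (hcigar (φ t) (hφmaps ht))

theorem IsUniformCurve.exists_lipschitzOnWith {A : ℝ} {Ω : Set ℂ} {γ : ℝ → ℂ}
    (hγ : IsUniformCurve A Ω γ) :
    ∃ g : ℝ → ℂ, IsUniformCurve A Ω g ∧ g 0 = γ 0 ∧ g 1 = γ 1 ∧
      LipschitzOnWith (Real.toNNReal (A * dist (γ 0) (γ 1))) g (Icc 0 1) := by
  have hbv : BoundedVariationOn γ (Icc 0 1) := ne_top_of_le_ne_top ENNReal.ofReal_ne_top hγ.2.2.1
  obtain ⟨φ, hφ, hφmaps, h0, h1, hlip⟩ := exists_monotoneOn_lipschitzOnWith_comp hγ.1 hbv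
  refine ⟨γ ∘ φ, hγ.comp_monotoneOn hφ hφmaps h0 h1 hlip.continuousOn, h0, h1,
    hlip.weaken ?_⟩
  exact ENNReal.toNNReal_le_toNNReal hbv ENNReal.ofReal_ne_top |>.2 hγ.2.2.1

theorem IsPreconnected.inter_frontier_nonempty {X : Type*} [TopologicalSpace X] {s t : Set X}
    (hs : IsPreconnected s) (hst : (s ∩ t).Nonempty) (hst' : (s \ t).Nonempty) :
    (s ∩ frontier t).Nonempty := by
  have := isPreconnected_iff_preconnectedSpace.1 hs
  obtain ⟨x, hxs, hxt⟩ := hst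
  obtain ⟨y, hys, hyt⟩ := hst'
  obtain ⟨z, hz⟩ : (frontier (((↑) : s → X) ⁻¹' t)).Nonempty := nonempty_frontier_iff.2
    ⟨⟨⟨x, hxs⟩, hxt⟩, (ne_univ_iff_exists_notMem _).2 ⟨⟨y, hys⟩, hyt⟩⟩
  exact ⟨z, z.2, continuous_subtype_val.frontier_preimage_subset t hz⟩

theorem Metric.infDist_frontier_le_infDist_compl {E : Type*} [NormedAddCommGroup E]
    [NormedSpace ℝ E] {U : Set E} {x : E} (hx : x ∈ U) (hne : Uᶜ.Nonempty) :
    infDist x (frontier U) ≤ infDist x Uᶜ := by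
  refine le_of_forall_gt fun r hr => ?_
  obtain ⟨y, hy, hxy⟩ := (infDist_lt_iff hne).1 hr
  obtain ⟨z, hz, hzU⟩ := (convex_segment x y).isPreconnected.inter_frontier_nonempty
    ⟨x, left_mem_segment ℝ x y, hx⟩ ⟨y, right_mem_segment ℝ x y, hy⟩
  calc infDist x (frontier U) ≤ dist x z := infDist_le_dist_of_mem hzU
    _ ≤ dist x y := by linarith [dist_add_dist_of_mem_segment hz, dist_nonneg (x := z) (y := y)]
    _ < r := hxy

theorem Metric.mem_of_hausdorffDist_compl_lt_infDist {X : Type*} [PseudoMetricSpace X]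
    {U F : Set X} {x : X} (hfin : hausdorffEDist Uᶜ F ≠ ⊤)
    (hlt : hausdorffDist Uᶜ F < infDist x F) : x ∈ U := by
  by_contra hx
  have := infDist_le_infDist_add_hausdorffDist (x := x) hfin
  rw [infDist_zero_of_mem (s := Uᶜ) hx, zero_add] at this
  exact this.not_gt hlt

theorem Metric.infDist_frontier_le_infDist_add_hausdorffDist {E : Type*} [NormedAddCommGroup E]
    [NormedSpace ℝ E] {U F : Set E} {x : E} (hx : x ∈ U) (hne : Uᶜ.Nonempty)
    (hfin : hausdorffEDist Uᶜ F ≠ ⊤) :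
    infDist x (frontier U) ≤ infDist x F + hausdorffDist Uᶜ F := by
  calc infDist x (frontier U) ≤ infDist x Uᶜ := infDist_frontier_le_infDist_compl hx hne
    _ ≤ infDist x F + hausdorffDist F Uᶜ :=
        infDist_le_infDist_add_hausdorffDist (by rwa [hausdorffEDist_comm])
    _ = infDist x F + hausdorffDist Uᶜ F := by rw [hausdorffDist_comm]

theorem min_eVariationOn_le_of_tendsto {ι α E : Type*} [LinearOrder α] [PseudoEMetricSpace E]
    {p : Filter ι} [p.NeBot] {F : ι → α → E} {f : α → E} {s t : Set α}
    (hs : ∀ x ∈ s, Tendsto (fun i => F i x) p (𝓝 (f x)))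
    (ht : ∀ x ∈ t, Tendsto (fun i => F i x) p (𝓝 (f x)))
    {c : ι → ℝ≥0∞} {c₀ : ℝ≥0∞} (hc : Tendsto c p (𝓝 c₀))
    (hle : ∀ i, min (eVariationOn (F i) s) (eVariationOn (F i) t) ≤ c i) :
    min (eVariationOn f s) (eVariationOn f t) ≤ c₀ := by
  by_contra! hlt
  obtain ⟨v, hc₀v, hv⟩ := exists_between hlt
  obtain ⟨i, hsi, hti, hci⟩ := ((eVariationOn.lowerSemicontinuous_aux hs (lt_min_iff.1 hv).1).and
    ((eVariationOn.lowerSemicontinuous_aux ht (lt_min_iff.1 hv).2).and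
      (hc.eventually (gt_mem_nhds hc₀v)))).exists
  exact (lt_min hsi hti).not_ge ((hle i).trans hci.le)

theorem exists_subseq_tendsto_of_lipschitzOnWith {X Y : Type*} [PseudoMetricSpace X]
    [MetricSpace Y] [ProperSpace Y] {s : Set X} (hs : IsCompact s) {K : ℝ≥0} {g : ℕ → X → Y}
    (hg : ∀ k, LipschitzOnWith K (g k) s) {x₀ : X} (hx₀ : x₀ ∈ s) {y₀ : Y}
    (hg₀ : ∀ k, g k x₀ = y₀) :
    ∃ f : X → Y, ContinuousOn f s ∧ ∃ σ : ℕ → ℕ, StrictMono σ ∧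
      ∀ x ∈ s, Tendsto (fun k => g (σ k) x) atTop (𝓝 (f x)) := by
  classical
  have : CompactSpace s := isCompact_iff_compactSpace.1 hs
  let G : ℕ → BoundedContinuousFunction s Y := fun k =>
    .mkOfCompact ⟨s.domRestrict (g k), (hg k).continuousOn.domRestrict⟩
  have hbound : ∀ k x, G k x ∈ closedBall y₀ (K * diam s) := fun k x => by
    rw [mem_closedBall, ← hg₀ k]
    exact ((hg k).dist_le_mul x x.2 x₀ hx₀).trans
      (mul_le_mul_of_nonneg_left (dist_le_diam_of_mem hs.isBounded x.2 hx₀) K.coe_nonneg)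
  have hequi : Equicontinuous ((↑) : range G → s → Y) := by
    refine (LipschitzWith.uniformEquicontinuous _ K fun F => ?_).equicontinuous
    obtain ⟨_, k, rfl⟩ := F
    exact (hg k).to_restrict
  obtain ⟨F, -, σ, hσ, hF⟩ := (BoundedContinuousFunction.arzela_ascoli _
    (isCompact_closedBall y₀ _) (range G) (by rintro _ x ⟨k, rfl⟩; exact hbound k x)
    hequi).tendsto_subseq fun k => subset_closure (mem_range_self k)
  refine ⟨fun x => if hx : x ∈ s then F ⟨x, hx⟩ else y₀, ?_, σ, hσ, fun x hx => ?_⟩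
  · rw [continuousOn_iff_continuous_domRestrict]
    convert F.continuous
    funext x
    simp [x.2]
  · simp only [dif_pos hx]
    exact ((continuous_eval_const (⟨x, hx⟩ : s)).tendsto F).comp hF

theorem notMem_of_min_eVariationOn_le_infDist {E : Type*} [MetricSpace E] {A : ℝ} {γ : ℝ → E}
    {F : Set E} {t : ℝ} (ht : t ∈ Icc (0:ℝ) 1) (h0 : γ 0 ∉ F) (h1 : γ 1 ∉ F)
    (hmin : min (eVariationOn γ (Icc 0 t)) (eVariationOn γ (Icc t 1))
      ≤ ENNReal.ofReal (A * infDist (γ t) F)) :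
    γ t ∉ F := by
  intro htF
  have hleft : edist (γ 0) (γ t) ≤ eVariationOn γ (Icc 0 t) :=
    eVariationOn.edist_le γ ⟨le_rfl, ht.1⟩ ⟨ht.1, le_rfl⟩
  have hright : edist (γ t) (γ 1) ≤ eVariationOn γ (Icc t 1) :=
    eVariationOn.edist_le γ ⟨le_rfl, ht.2⟩ ⟨ht.2, le_rfl⟩
  have hzero := (min_le_min hleft hright).trans hmin
  rw [infDist_zero_of_mem htF, mul_zero, ENNReal.ofReal_zero] at hzero
  rcases min_le_iff.1 hzero with h | h
  · exact h0 (edist_le_zero.1 h ▸ htF)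
  · exact h1 (edist_le_zero.1 h ▸ htF)

theorem exists_uniformCurve_compl_of_tendsto {A : ℝ} (hA : 0 ≤ A) {E : Set ℂ} (hE : IsClosed E)
    (hEne : E.Nonempty) {a b : ℂ} (ha : a ∉ E) (hb : b ∉ E) {K : ℝ≥0} {g : ℕ → ℝ → ℂ}
    {ε : ℕ → ℝ} (hε : Tendsto ε atTop (𝓝 0)) (hg0 : ∀ k, g k 0 = a) (hg1 : ∀ k, g k 1 = b)
    (hlip : ∀ k, LipschitzOnWith K (g k) (Icc 0 1))
    (hlength : ∀ k, eVariationOn (g k) (Icc 0 1) ≤ ENNReal.ofReal (A * dist a b))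
    (hcigar : ∀ k, ∀ t ∈ Icc (0:ℝ) 1,
      min (eVariationOn (g k) (Icc 0 t)) (eVariationOn (g k) (Icc t 1))
        ≤ ENNReal.ofReal (A * (infDist (g k t) E + ε k))) :
    ∃ γ : ℝ → ℂ, IsUniformCurve A Eᶜ γ ∧ γ 0 = a ∧ γ 1 = b := by
  have h0 : (0:ℝ) ∈ Icc (0:ℝ) 1 := left_mem_Icc.2 zero_le_one
  have h1 : (1:ℝ) ∈ Icc (0:ℝ) 1 := right_mem_Icc.2 zero_le_one
  obtain ⟨γ, hγ, σ, hσ, hlim⟩ :=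
    exists_subseq_tendsto_of_lipschitzOnWith isCompact_Icc hlip h0 hg0
  have hγ0 : γ 0 = a := tendsto_nhds_unique (hlim 0 h0) (by simp [hg0])
  have hγ1 : γ 1 = b := tendsto_nhds_unique (hlim 1 h1) (by simp [hg1])
  have hcigarE : ∀ t ∈ Icc (0:ℝ) 1, min (eVariationOn γ (Icc 0 t)) (eVariationOn γ (Icc t 1))
      ≤ ENNReal.ofReal (A * infDist (γ t) E) := by
    intro t ht
    have hbound := (((continuous_infDist_pt E).tendsto _).comp (hlim t ht)).add
      (hε.comp hσ.tendsto_atTop)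
    rw [add_zero] at hbound
    exact min_eVariationOn_le_of_tendsto (fun x hx => hlim x ⟨hx.1, hx.2.trans ht.2⟩)
      (fun x hx => hlim x ⟨ht.1.trans hx.1, hx.2⟩)
      ((ENNReal.continuous_ofReal.tendsto _).comp (hbound.const_mul A))
      fun k => hcigar (σ k) t ht
  have hmaps : MapsTo γ (Icc 0 1) Eᶜ := fun t ht =>
    notMem_of_min_eVariationOn_le_infDist ht (hγ0 ▸ ha) (hγ1 ▸ hb) (hcigarE t ht)
  have hfrontier : ∀ x, infDist x E ≤ infDist x (frontier Eᶜ) := fun x =>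
    infDist_le_infDist_of_subset (frontier_compl E ▸ hE.frontier_subset)
      (nonempty_frontier_iff.2 ⟨⟨a, ha⟩, fun h => hEne.ne_empty (compl_univ_iff.1 h)⟩)
  refine ⟨γ, ⟨hγ, hmaps, ?_, fun t ht => (hcigarE t ht).trans ?_⟩, hγ0, hγ1⟩
  · rw [hγ0, hγ1, ← min_self (eVariationOn γ _)]
    exact min_eVariationOn_le_of_tendsto hlim hlim tendsto_const_nhds fun k =>
      (min_self _).trans_le (hlength (σ k))
  · exact ENNReal.ofReal_le_ofReal (mul_le_mul_of_nonneg_left (hfrontier _) hA)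

theorem IsUniformDomain.exists_lipschitzOnWith_curve {A : ℝ} (hA : 0 ≤ A) {Ω E : Set ℂ}
    (hΩ : IsUniformDomain A Ω) (hne : Ωᶜ.Nonempty) (hfin : hausdorffEDist Ωᶜ E ≠ ⊤) {a b : ℂ}
    (ha : a ∈ Ω) (hb : b ∈ Ω) :
    ∃ g : ℝ → ℂ, g 0 = a ∧ g 1 = b ∧
      LipschitzOnWith (Real.toNNReal (A * dist a b)) g (Icc 0 1) ∧
      eVariationOn g (Icc 0 1) ≤ ENNReal.ofReal (A * dist a b) ∧
      ∀ t ∈ Icc (0:ℝ) 1, min (eVariationOn g (Icc 0 t)) (eVariationOn g (Icc t 1))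
        ≤ ENNReal.ofReal (A * (infDist (g t) E + hausdorffDist Ωᶜ E)) := by
  obtain ⟨γ, hγ, rfl, rfl⟩ := hΩ.2.2 a ha b hb
  obtain ⟨g, ⟨-, hgmaps, hglength, hgcigar⟩, hg0, hg1, hlip⟩ := hγ.exists_lipschitzOnWith
  refine ⟨g, hg0, hg1, hlip, by rwa [hg0, hg1] at hglength, fun t ht => (hgcigar t ht).trans ?_⟩
  exact ENNReal.ofReal_le_ofReal (mul_le_mul_of_nonneg_left
    (infDist_frontier_le_infDist_add_hausdorffDist (hgmaps ht) hne hfin) hA)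

theorem exists_uniformCurve_compl_of_tendsto_hausdorffEDist {A : ℝ} (hA : 0 ≤ A)
    {Ωs : ℕ → Set ℂ} (hunif : ∀ n, IsUniformDomain A (Ωs n)) {E : Set ℂ} (hE : IsClosed E)
    (hEne : E.Nonempty) (hconv : Tendsto (fun n => hausdorffEDist (Ωs n)ᶜ E) atTop (𝓝 0))
    {a b : ℂ} (ha : a ∉ E) (hb : b ∉ E) :
    ∃ γ : ℝ → ℂ, IsUniformCurve A Eᶜ γ ∧ γ 0 = a ∧ γ 1 = b := by
  have hε : Tendsto (fun n => hausdorffDist (Ωs n)ᶜ E) atTop (𝓝 0) :=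
    ENNReal.toReal_zero ▸ (ENNReal.tendsto_toReal ENNReal.zero_ne_top).comp hconv
  have hpos : 0 < min (infDist a E) (infDist b E) :=
    lt_min ((hE.notMem_iff_infDist_pos hEne).1 ha) ((hE.notMem_iff_infDist_pos hEne).1 hb)
  obtain ⟨N, hN⟩ := eventually_atTop.1
    ((hconv.eventually (gt_mem_nhds one_pos)).and (hε.eventually (gt_mem_nhds hpos)))
  have hfin : ∀ n ≥ N, hausdorffEDist (Ωs n)ᶜ E ≠ ⊤ := fun n hn => (hN n hn).1.ne_top
  have hne : ∀ n ≥ N, (Ωs n)ᶜ.Nonempty := fun n hn =>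
    nonempty_of_hausdorffEDist_ne_top hEne (by rw [hausdorffEDist_comm]; exact hfin n hn)
  have hmem {x : ℂ} (hx : min (infDist a E) (infDist b E) ≤ infDist x E) :
      ∀ n ≥ N, x ∈ Ωs n := fun n hn =>
    mem_of_hausdorffDist_compl_lt_infDist (hfin n hn) ((hN n hn).2.trans_le hx)
  choose! g hg0 hg1 hlip hlength hcigar using fun n (hn : n ≥ N) =>
    (hunif n).exists_lipschitzOnWith_curve hA (hne n hn) (hfin n hn)
      (hmem (min_le_left _ _) n hn) (hmem (min_le_right _ _) n hn)
  have hN' : ∀ k, k + N ≥ N := fun k => Nat.le_add_left N k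
  exact exists_uniformCurve_compl_of_tendsto hA hE hEne ha hb (hε.comp (tendsto_add_atTop_nat N))
    (fun k => hg0 _ (hN' k)) (fun k => hg1 _ (hN' k)) (fun k => hlip _ (hN' k))
    (fun k => hlength _ (hN' k)) (fun k => hcigar _ (hN' k))

theorem statement_9 (A : ℝ) (hA : 1 ≤ A) (Ωs : ℕ → Set ℂ)
    (hunif : ∀ n, IsUniformDomain A (Ωs n))
    (E : Set ℂ) (hE : IsCompact E)
    (hconv : Tendsto (fun n => EMetric.hausdorffEdist (Ωs n)ᶜ E) atTop (nhds 0)) :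
    IsUniformDomain A Eᶜ := by
  have hconv : Tendsto (fun n => hausdorffEDist (Ωs n)ᶜ E) atTop (𝓝 0) := hconv
  rcases E.eq_empty_or_nonempty with rfl | hEne
  · obtain ⟨N, hN⟩ := (hconv.eventually (gt_mem_nhds one_pos)).exists
    have hΩN : Ωs N = univ := by
      by_contra h
      rw [hausdorffEDist_empty (nonempty_compl.2 h)] at hN
      exact not_top_lt hN
    rw [compl_empty, ← hΩN]
    exact hunif N
  have hcurve {a b : ℂ} (ha : a ∈ Eᶜ) (hb : b ∈ Eᶜ) :=
    exists_uniformCurve_compl_of_tendsto_hausdorffEDist (zero_le_one.trans hA) hunif hE.isClosed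
      hEne hconv ha hb
  refine ⟨hE.isClosed.isOpen_compl, ⟨nonempty_compl.2 hE.ne_univ, ?_⟩,
    fun a ha b hb => hcurve ha hb⟩
  refine isPreconnected_of_forall_pair fun x hx y hy => ?_
  obtain ⟨γ, ⟨hγ, hγmaps, -⟩, rfl, rfl⟩ := hcurve hx hy
  exact ⟨γ '' Icc 0 1, hγmaps.image_subset, mem_image_of_mem γ (left_mem_Icc.2 zero_le_one),
    mem_image_of_mem γ (right_mem_Icc.2 zero_le_one), isPreconnected_Icc.image γ hγ⟩
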